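/- Let Z be a square-integrable random vector in R^k with representation W, MMSE estimate Z̃ = E[Z|W], and let Z' be jointly distributed with (Z,W) such that Z ↔ W ↔ Z' is a Markov chain, p_{Z'} = p_Z, and E[‖Z' − Z̃‖²] = W₂²(p_Z, p_{Z̃}). For P ∈ [0, W₂²(p_Z, p_{Z̃})), define Ẑ = (1 − √P/W₂(p_Z,p_{Z̃})) Z' + (√P/W₂(p_Z,p_{Z̃})) Z̃. Then W₂²(p_Z, p_{Ẑ}) ≤ P and E[‖Z − Ẑ‖²] = E[‖Z − Z̃‖²] + (W₂(p_Z, p_{Z̃}) − √P)². -/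

import Mathlib

/-!
With `t = √P / W₂(p_Z, p_Z̃)` we have `Z' - Ẑ = t • (Z' - Z̃)`, so the coupling `(Z', Ẑ)` costs
`t² W₂² = P`, and `p_{Z'} = p_Z`. For the distortion, `Z - Ẑ = (Z - Z̃) + (t - 1) • (Z' - Z̃)`.
Because `U` is independent of `(Z, W)`, also conditioning on `(W, U)` yields `Z̃`; hence the error
`Z - Z̃` is orthogonal in `L²` to `Z' - Z̃`, which is a function of `(W, U)`, and Pythagoras gives
`E‖Z - Ẑ‖² = E‖Z - Z̃‖² + (1 - t)² W₂²`.
-/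

open MeasureTheory ProbabilityTheory Real

/-- Squared Wasserstein-2 distance: infimum over couplings of the expected squared distance. -/
noncomputable def W2sq {E : Type*} [MeasurableSpace E] [NormedAddCommGroup E]
    (p q : Measure E) : ℝ :=
  (⨅ γ : {γ : Measure (E × E) // γ.map Prod.fst = p ∧ γ.map Prod.snd = q},
    ∫⁻ z, (‖z.1 - z.2‖₊ : ENNReal) ^ 2 ∂(γ.1)).toReal

theorem W2sq_map_le_integral_norm_sub_sq {Ω E : Type*} [MeasurableSpace Ω] [MeasurableSpace E]
    [NormedAddCommGroup E] {μ : Measure Ω} {X Y : Ω → E} (hX : Measurable X) (hY : Measurable Y)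
    (hXY : Integrable (fun ω => ‖X ω - Y ω‖ ^ 2) μ) :
    W2sq (μ.map X) (μ.map Y) ≤ ∫ ω, ‖X ω - Y ω‖ ^ 2 ∂μ := by
  have hpair : Measurable fun ω => (X ω, Y ω) := hX.prodMk hY
  let γ : {γ : Measure (E × E) // γ.map Prod.fst = μ.map X ∧ γ.map Prod.snd = μ.map Y} :=
    ⟨μ.map fun ω => (X ω, Y ω), by rw [Measure.map_map measurable_fst hpair]; rfl,
      by rw [Measure.map_map measurable_snd hpair]; rfl⟩
  have hcost : ∫⁻ z, (‖z.1 - z.2‖₊ : ENNReal) ^ 2 ∂γ.1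
      ≤ ENNReal.ofReal (∫ ω, ‖X ω - Y ω‖ ^ 2 ∂μ) := by
    refine (lintegral_map_le _ _).trans_eq ?_
    rw [ofReal_integral_eq_lintegral_ofReal hXY (.of_forall fun _ => sq_nonneg _)]
    congr 1 with ω
    rw [ENNReal.ofReal_pow (norm_nonneg _), ofReal_norm, enorm_eq_nnnorm]
  exact ENNReal.toReal_le_of_le_ofReal (integral_nonneg fun _ => sq_nonneg _)
    ((iInf_le _ γ).trans hcost)

theorem W2sq_map_smul_add_smul_le {Ω E : Type*} [MeasurableSpace Ω] [NormedAddCommGroup E]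
    [NormedSpace ℝ E] [MeasurableSpace E] [BorelSpace E] [SecondCountableTopology E]
    {μ : Measure Ω} {X Y : Ω → E} (hX : Measurable X) (hY : Measurable Y)
    (hXY : Integrable (fun ω => ‖X ω - Y ω‖ ^ 2) μ) (t : ℝ) :
    W2sq (μ.map X) (μ.map fun ω => (1 - t) • X ω + t • Y ω)
      ≤ t ^ 2 * ∫ ω, ‖X ω - Y ω‖ ^ 2 ∂μ := by
  have hnorm : ∀ ω, ‖X ω - ((1 - t) • X ω + t • Y ω)‖ ^ 2 = t ^ 2 * ‖X ω - Y ω‖ ^ 2 :=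
    fun ω => by
      rw [show X ω - ((1 - t) • X ω + t • Y ω) = t • (X ω - Y ω) by module, norm_smul, mul_pow,
        Real.norm_eq_abs, sq_abs]
  calc _ ≤ ∫ ω, ‖X ω - ((1 - t) • X ω + t • Y ω)‖ ^ 2 ∂μ :=
        W2sq_map_le_integral_norm_sub_sq hX (by fun_prop)
          (by simp_rw [hnorm]; exact hXY.const_mul _)
    _ = t ^ 2 * ∫ ω, ‖X ω - Y ω‖ ^ 2 ∂μ := by simp_rw [hnorm]; exact integral_const_mul _ _

theorem MeasureTheory.MemLp.integrable_inner {α E : Type*} [MeasurableSpace α] {μ : Measure α}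
    [NormedAddCommGroup E] [InnerProductSpace ℝ E] {f g : α → E} (hf : MemLp f 2 μ)
    (hg : MemLp g 2 μ) : Integrable (fun x => inner ℝ (f x) (g x)) μ := by
  refine (L2.integrable_inner (𝕜 := ℝ) (hf.toLp f) (hg.toLp g)).congr ?_
  filter_upwards [hf.coeFn_toLp, hg.coeFn_toLp] with x hf' hg'
  rw [hf', hg']

theorem integral_norm_add_smul_sq_of_integral_inner_eq_zero {α E : Type*} [MeasurableSpace α]
    {μ : Measure α} [NormedAddCommGroup E] [InnerProductSpace ℝ E] {f g : α → E}
    (hf : MemLp f 2 μ) (hg : MemLp g 2 μ) (horth : ∫ x, inner ℝ (f x) (g x) ∂μ = 0) (c : ℝ) :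
    ∫ x, ‖f x + c • g x‖ ^ 2 ∂μ = ∫ x, ‖f x‖ ^ 2 ∂μ + c ^ 2 * ∫ x, ‖g x‖ ^ 2 ∂μ := by
  have hexpand : ∀ x, ‖f x + c • g x‖ ^ 2
      = ‖f x‖ ^ 2 + 2 * c * inner ℝ (f x) (g x) + c ^ 2 * ‖g x‖ ^ 2 := fun x => by
    rw [norm_add_sq_real, real_inner_smul_right, norm_smul, mul_pow, Real.norm_eq_abs, sq_abs]
    ring
  have hf2 := hf.integrable_norm_pow two_ne_zero
  have hg2 := hg.integrable_norm_pow two_ne_zero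
  simp_rw [hexpand]
  rw [integral_add (f := fun x => ‖f x‖ ^ 2 + 2 * c * inner ℝ (f x) (g x))
      (hf2.add ((hf.integrable_inner hg).const_mul _)) (hg2.const_mul _),
    integral_add hf2 ((hf.integrable_inner hg).const_mul _), integral_const_mul,
    integral_const_mul, horth, mul_zero, add_zero]

theorem integral_inner_sub_condExp_eq_zero {α E : Type*} [NormedAddCommGroup E]
    [InnerProductSpace ℝ E] [CompleteSpace E] {m m₀ : MeasurableSpace α} {μ : Measure α}
    [IsFiniteMeasure μ] (hm : m ≤ m₀) {f g : α → E} (hf : MemLp f 2 μ) (hg : MemLp g 2 μ)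
    (hgm : AEStronglyMeasurable[m] g μ) :
    ∫ x, inner ℝ (f x - μ[f | m] x) (g x) ∂μ = 0 := by
  have hproj := inner_condExpL2_eq_inner_fun (𝕜 := ℝ) hm hf.toLp hg.toLp
    (hgm.congr hg.coeFn_toLp.symm)
  rw [L2.inner_def, L2.inner_def] at hproj
  have hcond : ∫ x, inner ℝ (μ[f | m] x) (g x) ∂μ = ∫ x, inner ℝ (f x) (g x) ∂μ := by
    convert hproj using 1 <;> refine integral_congr_ae ?_
    · filter_upwards [hf.condExpL2_ae_eq_condExp (𝕜 := ℝ) hm, hg.coeFn_toLp] with x hf' hg'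
      rw [hf', hg']
    · filter_upwards [hf.coeFn_toLp, hg.coeFn_toLp] with x hf' hg'
      rw [hf', hg']
  simp_rw [inner_sub_left]
  rw [integral_sub (hf.integrable_inner hg) ((hf.condExp one_le_two).integrable_inner hg), hcond,
    sub_self]

theorem IsPiSystem.image2_inter {α : Type*} {C D : Set (Set α)} (hC : IsPiSystem C)
    (hD : IsPiSystem D) : IsPiSystem (Set.image2 (· ∩ ·) C D) := by
  rintro _ ⟨a, ha, b, hb, rfl⟩ _ ⟨c, hc, e, he, rfl⟩ hne
  rw [Set.inter_inter_inter_comm] at hne ⊢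
  exact ⟨_, hC a ha c hc hne.left, _, hD b hb e he hne.right, rfl⟩

theorem MeasurableSpace.sup_eq_generateFrom_image2_inter {α : Type*} (m₁ m₂ : MeasurableSpace α) :
    m₁ ⊔ m₂ = generateFrom
      (Set.image2 (· ∩ ·) {s | MeasurableSet[m₁] s} {t | MeasurableSet[m₂] t}) := by
  refine le_antisymm (sup_le (fun s hs => ?_) (fun t ht => ?_)) (generateFrom_le ?_)
  · exact measurableSet_generateFrom ⟨s, hs, Set.univ, @MeasurableSet.univ _ m₂, Set.inter_univ s⟩
  · exact measurableSet_generateFrom ⟨Set.univ, @MeasurableSet.univ _ m₁, t, ht, Set.univ_inter t⟩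
  · rintro _ ⟨s, hs, t, ht, rfl⟩
    exact (le_sup_left (b := m₂) s hs).inter (le_sup_right (a := m₁) t ht)

section IndepConditioning

variable {Ω E : Type*} [NormedAddCommGroup E] [NormedSpace ℝ E] [CompleteSpace E]
  {m m₁ m₂ mΩ : MeasurableSpace Ω} {μ : Measure Ω} [IsFiniteMeasure μ]

theorem setIntegral_inter_eq_measureReal_smul_of_indep (hle₁ : m₁ ≤ mΩ) (hle₂ : m₂ ≤ mΩ)
    (hind : Indep m₁ m₂ μ) {g : Ω → E} (hg : StronglyMeasurable[m₁] g) (hgi : Integrable g μ)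
    {s t : Set Ω} (hs : MeasurableSet[m₁] s) (ht : MeasurableSet[m₂] t) :
    ∫ x in s ∩ t, g x ∂μ = μ.real t • ∫ x in s, g x ∂μ := by
  have hgs : Integrable (s.indicator g) μ := hgi.indicator (hle₁ _ hs)
  calc ∫ x in s ∩ t, g x ∂μ = ∫ x in t, s.indicator g x ∂μ := by
        rw [setIntegral_indicator (hle₁ _ hs), Set.inter_comm]
    _ = ∫ x in t, μ[s.indicator g | m₂] x ∂μ := (setIntegral_condExp hle₂ hgs ht).symm
    _ = ∫ x in t, (∫ y, s.indicator g y ∂μ) ∂μ :=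
        setIntegral_congr_ae (hle₂ _ ht)
          ((condExp_indep_eq hle₁ hle₂ (hg.indicator hs) hind).mono fun _ hx _ => hx)
    _ = μ.real t • ∫ x in s, g x ∂μ := by
        rw [setIntegral_const, integral_indicator (hle₁ _ hs)]

theorem condExp_sup_indep_ae_eq (hm : m ≤ m₁) (hle₁ : m₁ ≤ mΩ) (hle₂ : m₂ ≤ mΩ)
    (hind : Indep m₁ m₂ μ) {f : Ω → E} (hf : StronglyMeasurable[m₁] f) (hfi : Integrable f μ) :
    μ[f | m ⊔ m₂] =ᵐ[μ] μ[f | m] := by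
  have hle : m ⊔ m₂ ≤ mΩ := sup_le (hm.trans hle₁) hle₂
  have hcondm : StronglyMeasurable[m₁] μ[f | m] := stronglyMeasurable_condExp.mono hm
  have key : ∀ s, MeasurableSet[m ⊔ m₂] s → ∫ x in s, μ[f | m] x ∂μ = ∫ x in s, f x ∂μ := by
    intro s hs
    induction s, hs using MeasurableSpace.induction_on_inter
        (MeasurableSpace.sup_eq_generateFrom_image2_inter m m₂)
        ((@MeasurableSpace.isPiSystem_measurableSet Ω m).image2_inter
          (@MeasurableSpace.isPiSystem_measurableSet Ω m₂)) with
    | empty => simp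
    | basic _ hst =>
      obtain ⟨s, hs, t, ht, rfl⟩ := hst
      rw [setIntegral_inter_eq_measureReal_smul_of_indep hle₁ hle₂ hind hcondm integrable_condExp
          (hm _ hs) ht, setIntegral_inter_eq_measureReal_smul_of_indep hle₁ hle₂ hind hf hfi
          (hm _ hs) ht, setIntegral_condExp (hm.trans hle₁) hfi hs]
    | compl t ht iht =>
      rw [setIntegral_compl (hle _ ht) integrable_condExp, setIntegral_compl (hle _ ht) hfi, iht,
        integral_condExp (hm.trans hle₁)]
    | iUnion s hdisj hsm ihs =>
      rw [integral_iUnion (fun i => hle _ (hsm i)) hdisj integrable_condExp.integrableOn,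
        integral_iUnion (fun i => hle _ (hsm i)) hdisj hfi.integrableOn]
      exact tsum_congr ihs
  exact (ae_eq_condExp_of_forall_setIntegral_eq hle hfi
    (fun _ _ _ => integrable_condExp.integrableOn) (fun s hs _ => key s hs)
    (stronglyMeasurable_condExp.mono (le_sup_left (b := m₂))).aestronglyMeasurable).symm

end IndepConditioning

theorem integral_inner_sub_condExp_comap_eq_zero_of_indepFun {Ω 𝓦 𝓤 E : Type*}
    [MeasurableSpace Ω] [MeasurableSpace 𝓦] [MeasurableSpace 𝓤] [NormedAddCommGroup E]
    [InnerProductSpace ℝ E] [CompleteSpace E] [MeasurableSpace E] [BorelSpace E]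
    [SecondCountableTopology E] {μ : Measure Ω} [IsProbabilityMeasure μ]
    {Z : Ω → E} {W : Ω → 𝓦} {U : Ω → 𝓤} (hZ : Measurable Z) (hW : Measurable W)
    (hU : Measurable U) (hZ2 : MemLp Z 2 μ) (hind : IndepFun (fun ω => (Z ω, W ω)) U μ)
    {Y : Ω → E} (hY : MemLp Y 2 μ)
    (hYm : AEStronglyMeasurable[MeasurableSpace.comap (fun ω => (W ω, U ω)) inferInstance] Y μ) :
    ∫ ω, inner ℝ (Z ω - μ[Z | MeasurableSpace.comap W inferInstance] ω) (Y ω) ∂μ = 0 := by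
  have hWZW : MeasurableSpace.comap W inferInstance
      ≤ MeasurableSpace.comap (fun ω => (Z ω, W ω)) inferInstance :=
    (comap_measurable (fun ω => (Z ω, W ω))).snd.comap_le
  have hZZW : StronglyMeasurable[MeasurableSpace.comap (fun ω => (Z ω, W ω)) inferInstance] Z :=
    (comap_measurable (fun ω => (Z ω, W ω))).fst.stronglyMeasurable
  have hsup : μ[Z | MeasurableSpace.comap (fun ω => (W ω, U ω)) inferInstance]
      =ᵐ[μ] μ[Z | MeasurableSpace.comap W inferInstance] := by
    rw [show MeasurableSpace.comap (fun ω => (W ω, U ω)) inferInstance = _ from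
      MeasurableSpace.comap_prodMk W U]
    exact condExp_sup_indep_ae_eq hWZW (hZ.prodMk hW).comap_le hU.comap_le
      ((IndepFun_iff_Indep _ _ _).mp hind) hZZW (hZ2.integrable one_le_two)
  rw [← integral_inner_sub_condExp_eq_zero (hW.prodMk hU).comap_le hZ2 hY hYm]
  refine integral_congr_ae ?_
  filter_upwards [hsup] with ω hω
  rw [hω]

theorem stmt3 {k : ℕ} {Ω 𝓦 : Type*} [MeasurableSpace Ω] [MeasurableSpace 𝓦]
    (μ : Measure Ω) [IsProbabilityMeasure μ]
    (Z : Ω → EuclideanSpace ℝ (Fin k)) (W : Ω → 𝓦) (U : Ω → ℝ)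
    (d : 𝓦 × ℝ → EuclideanSpace ℝ (Fin k))
    (hZmeas : Measurable Z) (hWmeas : Measurable W) (hUmeas : Measurable U)
    (hdmeas : Measurable d) (hZ2 : MemLp Z 2 μ)
    (hindep : IndepFun (fun ω => (Z ω, W ω)) U μ)
    (Zt : Ω → EuclideanSpace ℝ (Fin k))
    (hZt : Zt = μ[Z | MeasurableSpace.comap W inferInstance])
    (Z' : Ω → EuclideanSpace ℝ (Fin k)) (hZ' : Z' = fun ω => d (W ω, U ω))
    (hZ'law : μ.map Z' = μ.map Z)
    (hZ'opt : ∫ ω, ‖Z' ω - Zt ω‖ ^ 2 ∂μ = W2sq (μ.map Z) (μ.map Zt))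
    (s : ℝ) (hs : s = Real.sqrt (W2sq (μ.map Z) (μ.map Zt)))
    (P : ℝ) (hP0 : 0 ≤ P) (hPlt : P < W2sq (μ.map Z) (μ.map Zt))
    (Zh : Ω → EuclideanSpace ℝ (Fin k))
    (hZh : Zh = fun ω => (1 - Real.sqrt P / s) • Z' ω + (Real.sqrt P / s) • Zt ω) :
    W2sq (μ.map Z) (μ.map Zh) ≤ P ∧
    ∫ ω, ‖Z ω - Zh ω‖ ^ 2 ∂μ =
      ∫ ω, ‖Z ω - Zt ω‖ ^ 2 ∂μ + (s - Real.sqrt P) ^ 2 := by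
  set t := Real.sqrt P / s
  have hW2pos : 0 < W2sq (μ.map Z) (μ.map Zt) := hP0.trans_lt hPlt
  have hspos : 0 < s := hs ▸ Real.sqrt_pos.mpr hW2pos
  have hts : t * s = Real.sqrt P := div_mul_cancel₀ _ hspos.ne'
  have hcost : ∫ ω, ‖Z' ω - Zt ω‖ ^ 2 ∂μ = s ^ 2 := by
    rw [hZ'opt, hs, Real.sq_sqrt hW2pos.le]
  -- a non-integrable function would have integral `0`, whereas the cost is `s ^ 2 > 0`
  have hcost_int : Integrable (fun ω => ‖Z' ω - Zt ω‖ ^ 2) μ :=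
    Integrable.of_integral_ne_zero (by rw [hcost]; positivity)
  have hZtm : StronglyMeasurable[MeasurableSpace.comap W inferInstance] Zt :=
    hZt ▸ stronglyMeasurable_condExp
  have hZ'm : Measurable[MeasurableSpace.comap (fun ω => (W ω, U ω)) inferInstance] Z' :=
    hZ' ▸ hdmeas.comp (comap_measurable _)
  have hZ'meas : Measurable Z' := hZ'm.mono (hWmeas.prodMk hUmeas).comap_le le_rfl
  have hZtmeas : Measurable Zt := (hZtm.mono hWmeas.comap_le).measurable
  have hD2 : MemLp (fun ω => Z' ω - Zt ω) 2 μ :=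
    (memLp_two_iff_integrable_sq_norm (hZ'meas.sub hZtmeas).aestronglyMeasurable).mpr hcost_int
  constructor
  · rw [← hZ'law, hZh]
    refine (W2sq_map_smul_add_smul_le hZ'meas hZtmeas hcost_int t).trans_eq ?_
    rw [hcost, ← mul_pow, hts, Real.sq_sqrt hP0]
  · have hWU : MeasurableSpace.comap W inferInstance
        ≤ MeasurableSpace.comap (fun ω => (W ω, U ω)) inferInstance :=
      (comap_measurable (fun ω => (W ω, U ω))).fst.comap_le
    have horth : ∫ ω, inner ℝ (Z ω - Zt ω) (Z' ω - Zt ω) ∂μ = 0 := by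
      have h := integral_inner_sub_condExp_comap_eq_zero_of_indepFun hZmeas hWmeas hUmeas hZ2
        hindep hD2 (hZ'm.stronglyMeasurable.sub (hZtm.mono hWU)).aestronglyMeasurable
      rwa [← hZt] at h
    have hdecomp : ∀ ω, Z ω - Zh ω = (Z ω - Zt ω) + (t - 1) • (Z' ω - Zt ω) := fun ω => by
      rw [hZh]; module
    simp_rw [hdecomp]
    rw [integral_norm_add_smul_sq_of_integral_inner_eq_zero (f := fun ω => Z ω - Zt ω)
      (hZ2.sub (hZt ▸ hZ2.condExp one_le_two)) hD2 horth, hcost, ← mul_pow, sub_mul, hts, one_mul]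
    ring
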